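/- Let q ≥ 2 and h, N, k be positive integers and V ≥ 0 a real number. Let A : Matrix (Fin h) (Fin N) (ZMod q). Let x_1, …, x_k : Fin N → ℤ with ‖x_i‖ ≤ (V / √(k/2)) · √N for every i, let τ : Fin k → ℕ, let m : Fin k → ℤ with m i ∈ {0, 1} for every i, and set x := Σ_{i=1}^{k} (−1)^{τ i} · (m i) · x_i. Suppose e* : Fin N → ℤ satisfies ‖e*‖ ≤ 2kV·√(2kN), e* ≠ x, and A·e* = A·x (equality in (ZMod q)^h). Then the vector e₀ := e* − x satisfies: e₀ ≠ 0, A·e₀ = 0 in (ZMod q)^h, and ‖e₀‖ ≤ 4kV·√(2kN); that is, e₀ is a valid solution to the SIS_{q,h,N,β} problem for A with bound β = 4kV·√(2kN). -/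

import Mathlib

/-! The forged difference `e* - x` is nonzero because `e* ≠ x`, lies in the kernel of `A` by
linearity, and is short by the triangle inequality: every coefficient `(-1)^τᵢ mᵢ` lies in
`{-1, 0, 1}`, so `‖x‖ ≤ k · V√N / √(k/2) = V√(2kN)`, which is at most `2kV√(2kN)`. -/

noncomputable def intEucNorm {N : ℕ} (e : Fin N → ℤ) : ℝ :=
  Real.sqrt (∑ i, ((e i : ℝ)) ^ 2)

section IntEucNorm

variable {N : ℕ}

-- Into `EuclideanSpace`, since the norm on `Fin N → ℝ` is the sup norm.
noncomputable def intToEuclidean : (Fin N → ℤ) →+ EuclideanSpace ℝ (Fin N) :=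
  AddMonoidHom.mk' (fun e => WithLp.toLp 2 fun i => (e i : ℝ)) fun a b => by
    ext i; simp

theorem intEucNorm_eq_norm (e : Fin N → ℤ) : intEucNorm e = ‖intToEuclidean e‖ := by
  simp [intEucNorm, intToEuclidean, EuclideanSpace.norm_eq]

theorem intEucNorm_sub_le (a b : Fin N → ℤ) :
    intEucNorm (a - b) ≤ intEucNorm a + intEucNorm b := by
  simpa only [intEucNorm_eq_norm, map_sub] using norm_sub_le _ _

theorem intEucNorm_zsmul (c : ℤ) (e : Fin N → ℤ) :
    intEucNorm (c • e) = ((|c| : ℤ) : ℝ) * intEucNorm e := by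
  simp only [intEucNorm_eq_norm, map_zsmul, norm_zsmul ℝ, Int.norm_cast_real, Int.norm_eq_abs,
    Int.cast_abs]

theorem intEucNorm_sum_zsmul_le {ι : Type*} (s : Finset ι) (c : ι → ℤ) (x : ι → Fin N → ℤ)
    {B : ℝ} (hc : ∀ i ∈ s, |c i| ≤ 1) (hx : ∀ i ∈ s, intEucNorm (x i) ≤ B) :
    intEucNorm (∑ i ∈ s, c i • x i) ≤ s.card * B := by
  have hterm : ∀ i ∈ s, intEucNorm (c i • x i) ≤ B := fun i hi => by
    have hci : ((|c i| : ℤ) : ℝ) ≤ 1 := by exact_mod_cast hc i hi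
    rw [intEucNorm_zsmul]
    exact (mul_le_of_le_one_left (Real.sqrt_nonneg _) hci).trans (hx i hi)
  calc intEucNorm (∑ i ∈ s, c i • x i)
      ≤ ∑ i ∈ s, intEucNorm (c i • x i) := by
        simpa only [intEucNorm_eq_norm, map_sum] using norm_sum_le _ _
    _ ≤ s.card * B := by simpa using Finset.sum_le_sum hterm

end IntEucNorm

theorem abs_neg_one_pow_mul_le_one (t : ℕ) {m : ℤ} (hm : m = 0 ∨ m = 1) :
    |(-1 : ℤ) ^ t * m| ≤ 1 := by
  rcases hm with rfl | rfl <;> simp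

theorem Matrix.mulVec_intCast_sub {h N q : ℕ} (A : Matrix (Fin h) (Fin N) (ZMod q))
    (a b : Fin N → ℤ) :
    A.mulVec (fun j => ((a - b) j : ZMod q))
      = A.mulVec (fun j => (a j : ZMod q)) - A.mulVec (fun j => (b j : ZMod q)) := by
  rw [← Matrix.mulVec_sub]
  congr 1
  ext j
  simp

theorem Real.mul_div_sqrt_half_mul_sqrt {k : ℝ} (hk : 0 ≤ k) (V N : ℝ) :
    k * (V / √(k / 2) * √N) = V * √(2 * k * N) := by
  have hdiv : k / √(k / 2) = √(2 * k) := by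
    rcases hk.eq_or_lt with rfl | hk
    · simp
    rw [div_eq_iff (by positivity), ← Real.sqrt_mul (by positivity),
      show 2 * k * (k / 2) = k ^ 2 by ring, Real.sqrt_sq hk.le]
  rw [Real.sqrt_mul (by positivity), ← hdiv]
  ring

theorem forgery_gives_sis_solution_general (q h N k : ℕ)
    (hk : 0 < k) (V : ℝ) (hV : 0 ≤ V)
    (A : Matrix (Fin h) (Fin N) (ZMod q))
    (x : Fin k → Fin N → ℤ)
    (hx : ∀ i, intEucNorm (x i) ≤ (V / Real.sqrt ((k : ℝ) / 2)) * Real.sqrt (N : ℝ))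
    (τ : Fin k → ℕ) (m : Fin k → ℤ) (hm : ∀ i, m i = 0 ∨ m i = 1)
    (estar : Fin N → ℤ)
    (hnorm : intEucNorm estar ≤ 2 * k * V * Real.sqrt (2 * k * N))
    (hne : estar ≠ ∑ i : Fin k, ((-1 : ℤ) ^ τ i * m i) • x i)
    (heq : A.mulVec (fun j => (estar j : ZMod q))
      = A.mulVec (fun j =>
          (((∑ i : Fin k, ((-1 : ℤ) ^ τ i * m i) • x i) j : ℤ) : ZMod q))) :
    (estar - ∑ i : Fin k, ((-1 : ℤ) ^ τ i * m i) • x i) ≠ 0 ∧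
    A.mulVec (fun j =>
        (((estar - ∑ i : Fin k, ((-1 : ℤ) ^ τ i * m i) • x i) j : ℤ) : ZMod q)) = 0 ∧
    intEucNorm (estar - ∑ i : Fin k, ((-1 : ℤ) ^ τ i * m i) • x i)
      ≤ 4 * k * V * Real.sqrt (2 * k * N) := by
  set xs := ∑ i : Fin k, ((-1 : ℤ) ^ τ i * m i) • x i
  refine ⟨sub_ne_zero.mpr hne, by rw [A.mulVec_intCast_sub, heq, sub_self], ?_⟩
  have hxs : intEucNorm xs ≤ V * √(2 * k * N) := by
    have := intEucNorm_sum_zsmul_le Finset.univ _ x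
      (fun i _ => abs_neg_one_pow_mul_le_one (τ i) (hm i)) (fun i _ => hx i)
    rwa [Finset.card_univ, Fintype.card_fin,
      Real.mul_div_sqrt_half_mul_sqrt k.cast_nonneg] at this
  have hk1 : (1 : ℝ) ≤ k := by exact_mod_cast hk
  have hVs : 0 ≤ V * √(2 * k * N) := mul_nonneg hV (Real.sqrt_nonneg _)
  calc intEucNorm (estar - xs) ≤ intEucNorm estar + intEucNorm xs := intEucNorm_sub_le _ _
    _ ≤ 4 * k * V * √(2 * k * N) := by nlinarith

/-- Core extraction step of the unforgeability reduction: a forged signature `e*`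
satisfying the verification equation and norm bound, with `e* ≠ x` for the known
preimage `x = ∑_i (−1)^{τ i} (m i) x_i`, yields a nonzero short SIS solution
`e₀ = e* − x` with `A·e₀ ≡ 0 (mod q)` and `‖e₀‖ ≤ 4kV√(2kN)`. -/
theorem forgery_gives_sis_solution (q h N k : ℕ) (hq : 2 ≤ q) (hh : 0 < h)
    (hN : 0 < N) (hk : 0 < k) (V : ℝ) (hV : 0 ≤ V)
    (A : Matrix (Fin h) (Fin N) (ZMod q))
    (x : Fin k → Fin N → ℤ)
    (hx : ∀ i, intEucNorm (x i) ≤ (V / Real.sqrt ((k : ℝ) / 2)) * Real.sqrt (N : ℝ))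
    (τ : Fin k → ℕ) (m : Fin k → ℤ) (hm : ∀ i, m i = 0 ∨ m i = 1)
    (estar : Fin N → ℤ)
    (hnorm : intEucNorm estar ≤ 2 * k * V * Real.sqrt (2 * k * N))
    (hne : estar ≠ ∑ i : Fin k, ((-1 : ℤ) ^ τ i * m i) • x i)
    (heq : A.mulVec (fun j => (estar j : ZMod q))
      = A.mulVec (fun j =>
          (((∑ i : Fin k, ((-1 : ℤ) ^ τ i * m i) • x i) j : ℤ) : ZMod q))) :
    (estar - ∑ i : Fin k, ((-1 : ℤ) ^ τ i * m i) • x i) ≠ 0 ∧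
    A.mulVec (fun j =>
        (((estar - ∑ i : Fin k, ((-1 : ℤ) ^ τ i * m i) • x i) j : ℤ) : ZMod q)) = 0 ∧
    intEucNorm (estar - ∑ i : Fin k, ((-1 : ℤ) ^ τ i * m i) • x i)
      ≤ 4 * k * V * Real.sqrt (2 * k * N) :=
  forgery_gives_sis_solution_general q h N k hk V hV A x hx τ m hm estar hnorm hne heq
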